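/- arXiv:math/0611688 — 2 statements merged into one kernel-verified Lean document; each statement's English description precedes it below -/
import Mathlib

section
/- Let N be a positive integer, let P be the uniform (symmetric Bernoulli) probability measure on {-1,+1}^N, and let F be a real function on {-1,+1}^N. Define for each i the partial Lipschitz seminorm ‖∂_i F‖_∞ = sup over pairs (h, h') agreeing off coordinate i of |F(h)-F(h')|/|h_i - h'_i|, and set ‖∂F‖²_∞ = Σ_{i=1}^N ‖∂_i F‖²_∞. Then for all t > 0, P[F - E(F) ≥ t] ≤ exp(-t² / (4‖∂F‖²_∞)). -/
/-!
Hoeffding's lemma for a symmetric two-point variable, `(e^{λa} + e^{λb}) / 2 ≤ e^{λ(a+b)/2} cosh (λ(a-b)/2)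
≤ e^{λ(a+b)/2 + λ²(a-b)²/8}`, applied to one coordinate at a time, bounds the moment generating
function of a function with bounded differences `c i` on the cube by `e^{λ E G + λ² Σ c i² / 8}`:
averaging out the first coordinate preserves the bounded differences in the remaining ones.
Chernoff's bound with `λ = 4t / Σ c i²` gives McDiarmid's inequality `P[G - E G ≥ t] ≤ e^{-2t²/Σ c i²}`,
and for `F` with partial Lipschitz constants `D i` at the points `±1` one has `c i = 2 D i`.
-/

open Finset Real

lemma Fin.sum_bool_succ {M : Type*} [AddCommMonoid M] (n : ℕ) (f : (Fin (n + 1) → Bool) → M) :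
    ∑ ω, f ω = ∑ ω : Fin n → Bool, (f (Fin.cons true ω) + f (Fin.cons false ω)) := by
  rw [← (Fin.consEquiv fun _ => Bool).sum_comp f, Fintype.sum_prod_type_right]
  simp [Fin.consEquiv]

lemma exp_mul_add_exp_mul_le {a b c : ℝ} (hab : |a - b| ≤ c) (l : ℝ) :
    exp (l * a) + exp (l * b) ≤ 2 * exp (l ^ 2 / 8 * c ^ 2) * exp (l * ((a + b) / 2)) := by
  set d := l * ((a - b) / 2)
  have hsplit : exp (l * a) + exp (l * b) = 2 * cosh d * exp (l * ((a + b) / 2)) := by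
    have ha : l * a = l * ((a + b) / 2) + d := by ring
    have hb : l * b = l * ((a + b) / 2) + -d := by ring
    rw [ha, hb, exp_add, exp_add, cosh_eq]
    ring
  have hd : d ^ 2 / 2 ≤ l ^ 2 / 8 * c ^ 2 := by
    have : (a - b) ^ 2 ≤ c ^ 2 := sq_le_sq' (abs_le.1 hab).1 (abs_le.1 hab).2
    have : d ^ 2 / 2 = l ^ 2 / 8 * (a - b) ^ 2 := by ring
    rw [this]
    gcongr
  rw [hsplit]
  gcongr
  exact (cosh_le_exp_half_sq d).trans (exp_le_exp.2 hd)

section BoundedDifferences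

variable {n : ℕ}

def HasBoundedDifferences (G : (Fin n → Bool) → ℝ) (c : Fin n → ℝ) : Prop :=
  ∀ i ω, |G (Function.update ω i true) - G (Function.update ω i false)| ≤ c i

noncomputable def headAvg (G : (Fin (n + 1) → Bool) → ℝ) (ω : Fin n → Bool) : ℝ :=
  (G (Fin.cons true ω) + G (Fin.cons false ω)) / 2

lemma sum_headAvg (G : (Fin (n + 1) → Bool) → ℝ) :
    ∑ ω, headAvg G ω = (∑ ω, G ω) / 2 := by
  rw [Fin.sum_bool_succ, sum_div]
  rfl

namespace HasBoundedDifferences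

variable {G : (Fin (n + 1) → Bool) → ℝ} {c : Fin (n + 1) → ℝ}

lemma abs_cons_sub_le (hG : HasBoundedDifferences G c) (ω : Fin n → Bool) :
    |G (Fin.cons true ω) - G (Fin.cons false ω)| ≤ c 0 := by
  simpa only [Fin.update_cons_zero] using hG 0 (Fin.cons false ω)

lemma headAvg (hG : HasBoundedDifferences G c) :
    HasBoundedDifferences (headAvg G) (fun i => c i.succ) := by
  intro i ω
  have h₁ := hG i.succ (Fin.cons true ω)
  have h₂ := hG i.succ (Fin.cons false ω)
  rw [← Fin.cons_update, ← Fin.cons_update] at h₁ h₂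
  unfold _root_.headAvg
  rw [abs_le] at h₁ h₂ ⊢
  constructor <;> linarith [h₁.1, h₁.2, h₂.1, h₂.2]

end HasBoundedDifferences

theorem sum_exp_mul_le_of_hasBoundedDifferences :
    ∀ {n : ℕ} {G : (Fin n → Bool) → ℝ} {c : Fin n → ℝ}, HasBoundedDifferences G c → ∀ l : ℝ,
      ∑ ω, exp (l * G ω) ≤ 2 ^ n * exp (l * ((∑ ω, G ω) / 2 ^ n) + l ^ 2 / 8 * ∑ i, c i ^ 2)
  | 0, G, c, _, l => by simp
  | n + 1, G, c, hG, l => by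
    have ih := sum_exp_mul_le_of_hasBoundedDifferences hG.headAvg l
    calc ∑ ω, exp (l * G ω)
        = ∑ ω : Fin n → Bool, (exp (l * G (Fin.cons true ω)) + exp (l * G (Fin.cons false ω))) :=
          Fin.sum_bool_succ n _
      _ ≤ ∑ ω : Fin n → Bool, 2 * exp (l ^ 2 / 8 * c 0 ^ 2) * exp (l * headAvg G ω) :=
          sum_le_sum fun ω _ => exp_mul_add_exp_mul_le (hG.abs_cons_sub_le ω) l
      _ = 2 * exp (l ^ 2 / 8 * c 0 ^ 2) * ∑ ω : Fin n → Bool, exp (l * headAvg G ω) :=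
          (mul_sum _ _ _).symm
      _ ≤ 2 * exp (l ^ 2 / 8 * c 0 ^ 2) * (2 ^ n *
            exp (l * ((∑ ω, headAvg G ω) / 2 ^ n) + l ^ 2 / 8 * ∑ i : Fin n, c i.succ ^ 2)) := by
          gcongr
      _ = 2 ^ (n + 1) *
            exp (l * ((∑ ω, G ω) / 2 ^ (n + 1)) + l ^ 2 / 8 * ∑ i, c i ^ 2) := by
          have hexp : l * ((∑ ω, G ω) / 2 ^ (n + 1)) + l ^ 2 / 8 * ∑ i, c i ^ 2 =
              l ^ 2 / 8 * c 0 ^ 2 + (l * ((∑ ω, G ω) / 2 / 2 ^ n) +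
                l ^ 2 / 8 * ∑ i : Fin n, c i.succ ^ 2) := by
            rw [Fin.sum_univ_succ, pow_succ]
            ring
          rw [sum_headAvg, hexp, exp_add (l ^ 2 / 8 * c 0 ^ 2), pow_succ]
          ring

end BoundedDifferences

lemma card_filter_le_exp_mul_sum_exp {α : Type*} (s : Finset α) (f : α → ℝ) {l : ℝ} (hl : 0 ≤ l)
    (t : ℝ) : (#{x ∈ s | t ≤ f x} : ℝ) ≤ exp (-(l * t)) * ∑ x ∈ s, exp (l * f x) := by
  have hone : ∀ x ∈ {x ∈ s | t ≤ f x}, 1 ≤ exp (-(l * t)) * exp (l * f x) := by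
    intro x hx
    rw [← exp_add]
    exact one_le_exp (by nlinarith [(mem_filter.1 hx).2])
  calc (#{x ∈ s | t ≤ f x} : ℝ)
      ≤ ∑ x ∈ s with t ≤ f x, exp (-(l * t)) * exp (l * f x) := by
        simpa using card_nsmul_le_sum _ _ 1 hone
    _ ≤ ∑ x ∈ s, exp (-(l * t)) * exp (l * f x) :=
        sum_le_sum_of_subset_of_nonneg (filter_subset _ _) fun _ _ _ => by positivity
    _ = exp (-(l * t)) * ∑ x ∈ s, exp (l * f x) := (mul_sum _ _ _).symm

theorem card_filter_sub_avg_ge_le {n : ℕ} {G : (Fin n → Bool) → ℝ} {c : Fin n → ℝ}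
    (hG : HasBoundedDifferences G c) {t : ℝ} (ht : 0 ≤ t) :
    (#{ω | t ≤ G ω - (∑ ω', G ω') / 2 ^ n} : ℝ) / 2 ^ n ≤ exp (-2 * t ^ 2 / ∑ i, c i ^ 2) := by
  set σ := ∑ i, c i ^ 2
  set μ := (∑ ω', G ω') / 2 ^ n
  rcases (show 0 ≤ σ by positivity).eq_or_lt with hσ | hσ
  · rw [← hσ, div_zero, exp_zero, div_le_one (by positivity)]
    exact_mod_cast (card_filter_le _ _).trans (by simp)
  set l := 4 * t / σ
  have hexp : -(l * t) + l ^ 2 / 8 * σ = -2 * t ^ 2 / σ := by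
    simp only [l]
    field_simp
    ring
  have hcard : (#{ω | t ≤ G ω - μ} : ℝ) ≤ 2 ^ n * exp (-2 * t ^ 2 / σ) := by
    calc (#{ω | t ≤ G ω - μ} : ℝ)
        ≤ exp (-(l * t)) * ∑ ω, exp (l * (G ω - μ)) :=
          card_filter_le_exp_mul_sum_exp _ _ (by positivity) t
      _ = exp (-(l * t)) * ((∑ ω, exp (l * G ω)) / exp (l * μ)) := by
          simp_rw [mul_sub, exp_sub, sum_div]
      _ ≤ exp (-(l * t)) * (2 ^ n * exp (l * μ + l ^ 2 / 8 * σ) / exp (l * μ)) := by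
          gcongr
          exact sum_exp_mul_le_of_hasBoundedDifferences hG l
      _ = 2 ^ n * exp (-2 * t ^ 2 / σ) := by
          rw [← hexp, exp_add, exp_add]
          field_simp
  rw [div_le_iff₀ (by positivity), mul_comm]
  exact hcard

lemma hasBoundedDifferences_of_sign {n : ℕ} {F : (Fin n → ℝ) → ℝ} {D : Fin n → ℝ}
    (hD : ∀ i : Fin n, ∀ h h' : Fin n → ℝ,
      (∀ j : Fin n, j ≠ i → h j = h' j) → |F h - F h'| ≤ D i * |h i - h' i|) :
    HasBoundedDifferences (fun ω => F fun i => if ω i then 1 else -1) (fun i => 2 * D i) := by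
  intro i ω
  have h := hD i (fun j => if Function.update ω i true j then 1 else -1)
    (fun j => if Function.update ω i false j then 1 else -1)
    (fun j hj => by simp [Function.update_of_ne hj])
  simp only [Function.update_self, if_true, Bool.false_eq_true, if_false] at h
  rwa [show |(1 : ℝ) - -1| = 2 by norm_num, mul_comm] at h

theorem stmt_0_general (N : ℕ) (F : (Fin N → ℝ) → ℝ) (D : Fin N → ℝ)
    (hD : ∀ i : Fin N, ∀ h h' : Fin N → ℝ,
      (∀ j : Fin N, j ≠ i → h j = h' j) → |F h - F h'| ≤ D i * |h i - h' i|)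
    (t : ℝ) (ht : 0 < t) :
    ((Finset.univ.filter (fun ω : Fin N → Bool =>
        F (fun i => if ω i then (1:ℝ) else -1)
          - (∑ ω' : Fin N → Bool, F (fun i => if ω' i then (1:ℝ) else -1)) / 2 ^ N
        ≥ t)).card : ℝ) / 2 ^ N
      ≤ Real.exp (-(t ^ 2) / (4 * ∑ i : Fin N, (D i) ^ 2)) := by
  refine (card_filter_sub_avg_ge_le (hasBoundedDifferences_of_sign hD) ht.le).trans
    (exp_le_exp.2 ?_)
  have hsum : ∑ i, (2 * D i) ^ 2 = 4 * ∑ i, D i ^ 2 := by simp only [mul_pow, mul_sum]; norm_num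
  rw [hsum]
  exact div_le_div_of_nonneg_right (by nlinarith) (by positivity)

/-- Concentration inequality for Lipschitz functions of i.i.d. symmetric
±1 Bernoulli random variables: if `D i` bounds the partial Lipschitz
seminorm of `F` in coordinate `i`, then
`P[F - E F ≥ t] ≤ exp(-t²/(4 Σ D i²))`. The uniform measure on `{-1,1}^N`
is modelled by counting over `Fin N → Bool`. -/
theorem stmt_0 (N : ℕ) (hN : 0 < N) (F : (Fin N → ℝ) → ℝ) (D : Fin N → ℝ)
    (hD : ∀ i : Fin N, ∀ h h' : Fin N → ℝ,
      (∀ j : Fin N, j ≠ i → h j = h' j) → |F h - F h'| ≤ D i * |h i - h' i|)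
    (t : ℝ) (ht : 0 < t) :
    ((Finset.univ.filter (fun ω : Fin N → Bool =>
        F (fun i => if ω i then (1:ℝ) else -1)
          - (∑ ω' : Fin N → Bool, F (fun i => if ω' i then (1:ℝ) else -1)) / 2 ^ N
        ≥ t)).card : ℝ) / 2 ^ N
      ≤ Real.exp (-(t ^ 2) / (4 * ∑ i : Fin N, (D i) ^ 2)) :=
  stmt_0_general N F D hD t ht
end

section
/- For every h > 0 and x > 0, the series g(x) = (4/π) Σ_{k=0}^∞ (−1)^k/((2k+1)h²) · exp(−(2k+1)² π² x/(8h²)) converges, g(x) ≥ 0, and ∫₀^∞ g(x) dx = 1; moreover its Laplace transform satisfies ∫₀^∞ e^{−λx} g(x) dx = (1/(h²λ))(1 − 1/cosh(h√(2λ))) for λ > 0. -/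
/-!
With `a = π² / (8h²)` the `k`-th term of `g x` is `(-1)ᵏ e^{-(2k+1)² a x} / ((2k+1) h²)`. These
terms decrease in absolute value, so the alternating sum is nonnegative, and integrating term by
term gives `∫₀^∞ e^{-λx} g x dx = (32/π³) Σ (-1)ᵏ / ((2k+1)((2k+1)² + β))` with `β = 8h²λ/π²`.

For `β = b² > 0` the `k`-th term of this series is `b⁻² ∫₀¹ t^{2k} (1 - cos (b log t)) dt`;
summing the geometric series under the integral leaves `b⁻² ∫₀¹ (1 - cos (b log t)) / (1 + t²) dt`.
By the symmetry `t ↦ 1/t`, `∫₀¹ cos (b log t) / (1 + t²) dt` is half of `∫₀^∞`, and the substitution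
`x = u² / (1 + u²)` turns the Beta integral `B((1+ib)/2, (1-ib)/2) = Γ(s) Γ(1-s) = π / cosh (πb/2)`
into `2 ∫₀^∞ u^{ib} / (1 + u²) du`. For `β = 0` the series is Dirichlet's `β(3) = π³/32`, which
gives total mass `1`.
-/

open Real MeasureTheory Set Filter

lemma hasSum_alternating_inv_odd_pow_three :
    HasSum (fun k : ℕ => (-1 : ℝ) ^ k / (2 * k + 1) ^ 3) (π ^ 3 / 32) := by
  have hodd : Function.Injective fun k : ℕ => 2 * k + 1 := fun a b hab => by simpa using hab
  refine (hodd.hasSum_iff fun n hn => ?_).mpr hasSum_L_function_mod_four_eval_three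
    |>.congr_fun ?_
  · obtain ⟨m, rfl⟩ : Even n := Nat.not_odd_iff_even.mp fun ⟨k, hk⟩ => hn ⟨k, hk.symm⟩
    rw [show π * ((m + m : ℕ) : ℝ) / 2 = m * π by push_cast; ring, sin_nat_mul_pi, mul_zero]
  · intro k
    rw [Function.comp_apply, show π * ((2 * k + 1 : ℕ) : ℝ) / 2 = k * π + π / 2 by push_cast; ring,
      sin_add_pi_div_two, cos_nat_mul_pi]
    push_cast
    ring

lemma summable_one_div_odd_mul_odd_sq_add {β : ℝ} (hβ : 0 ≤ β) :
    Summable fun k : ℕ => 1 / ((2 * k + 1) * ((2 * k + 1) ^ 2 + β)) := by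
  refine hasSum_alternating_inv_odd_pow_three.summable.abs.of_nonneg_of_le
    (fun k => by positivity) fun k => ?_
  rw [abs_div, abs_pow, abs_neg, abs_one, one_pow, abs_of_pos (by positivity)]
  gcongr
  nlinarith [(by positivity : (0:ℝ) < 2 * k + 1)]

lemma tsum_alternating_nonneg_of_antitone {f : ℕ → ℝ} (hf : Antitone f)
    (hs : Summable fun k => (-1) ^ k * f k) : 0 ≤ ∑' k, (-1) ^ k * f k := by
  simpa using hf.alternating_series_le_tendsto hs.hasSum.tendsto_sum_nat 0

lemma integral_tsum_mul_of_nonneg {α : Type*} [MeasurableSpace α] {μ : Measure α}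
    (c : ℕ → ℝ) {f : ℕ → α → ℝ} (hf : ∀ k, Integrable (f k) μ) (hf0 : ∀ k, 0 ≤ᵐ[μ] f k)
    (hs : Summable fun k => |c k| * ∫ a, f k a ∂μ) :
    ∫ a, ∑' k, c k * f k a ∂μ = ∑' k, c k * ∫ a, f k a ∂μ := by
  have hnorm : ∀ k, ∫ a, ‖c k * f k a‖ ∂μ = |c k| * ∫ a, f k a ∂μ := fun k => by
    rw [← integral_const_mul]
    refine integral_congr_ae ((hf0 k).mono fun a ha => ?_)
    simp only [norm_mul, norm_eq_abs, abs_of_nonneg ha]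
  rw [← integral_tsum_of_summable_integral_norm (fun k => (hf k).const_mul (c k))
    (by simpa only [hnorm] using hs)]
  simp only [integral_const_mul]

lemma integral_exp_neg_mul_Ioi {d : ℝ} (hd : 0 < d) :
    ∫ x in Ioi (0 : ℝ), exp (-(d * x)) = 1 / d := by
  simp_rw [← neg_mul]
  rw [integral_exp_mul_Ioi (neg_neg_of_pos hd), mul_zero, exp_zero]
  field_simp

lemma integral_Ioi_tsum_mul_exp_neg (c : ℕ → ℝ) {d : ℕ → ℝ} (hd : ∀ k, 0 < d k)
    (hs : Summable fun k => |c k| / d k) :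
    ∫ x in Ioi (0 : ℝ), ∑' k, c k * exp (-(d k * x)) = ∑' k, c k / d k := by
  have hint : ∀ k, IntegrableOn (fun x => exp (-(d k * x))) (Ioi 0) := fun k => by
    simpa only [neg_mul] using exp_neg_integrableOn_Ioi 0 (hd k)
  rw [integral_tsum_mul_of_nonneg c hint (fun k => ae_of_all _ fun x => (exp_pos _).le)
    (by simpa only [integral_exp_neg_mul_Ioi (hd _), mul_one_div] using hs)]
  simp only [integral_exp_neg_mul_Ioi (hd _), mul_one_div]

lemma re_ofReal_cpow_natCast_add_mul_I {t : ℝ} (ht : 0 < t) (n : ℕ) (b : ℝ) :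
    ((t : ℂ) ^ ((n : ℂ) + b * Complex.I)).re = t ^ n * cos (b * log t) := by
  have ht' : (t : ℂ) ≠ 0 := Complex.ofReal_ne_zero.mpr ht.ne'
  rw [Complex.cpow_add _ _ ht', Complex.cpow_natCast, Complex.cpow_def_of_ne_zero ht',
    ← Complex.ofReal_log ht.le, ← Complex.ofReal_pow, ← mul_assoc, ← Complex.ofReal_mul,
    Complex.re_ofReal_mul, Complex.exp_ofReal_mul_I_re, mul_comm (log t)]

lemma integrableOn_Ioo_pow_mul_of_bounded {g : ℝ → ℝ} (hg : Measurable g) {C : ℝ}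
    (hC : ∀ t, |g t| ≤ C) (n : ℕ) : IntegrableOn (fun t => t ^ n * g t) (Ioo 0 1) := by
  refine Measure.integrableOn_of_bounded (M := C) measure_Ioo_lt_top.ne (by fun_prop)
    ((ae_restrict_mem measurableSet_Ioo).mono fun t ht => ?_)
  rw [norm_mul, norm_pow, norm_eq_abs, norm_eq_abs, abs_of_pos ht.1]
  simpa using mul_le_mul (pow_le_one₀ ht.1.le ht.2.le) (hC t) (abs_nonneg _) zero_le_one

lemma integral_Ioo_pow_mul_cos_mul_log (n : ℕ) (b : ℝ) :
    ∫ t in Ioo 0 1, t ^ n * cos (b * log t) = (n + 1) / ((n + 1) ^ 2 + b ^ 2) := by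
  set c : ℂ := n + b * Complex.I
  have hc : -1 < c.re := by
    simp only [c, Complex.add_re, Complex.natCast_re, Complex.re_ofReal_mul, Complex.I_re,
      mul_zero, add_zero]
    linarith [(n.cast_nonneg : (0 : ℝ) ≤ n)]
  have hc1 : c + 1 ≠ 0 := fun h => by
    have := congrArg Complex.re h
    rw [Complex.add_re, Complex.one_re, Complex.zero_re] at this
    linarith
  have hint : IntegrableOn (fun t : ℝ => (t : ℂ) ^ c) (Ioc 0 1) :=
    (intervalIntegral.intervalIntegrable_cpow' hc).1
  have hval : ∫ t : ℝ in Ioc 0 1, (t : ℂ) ^ c = 1 / (c + 1) := by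
    rw [← intervalIntegral.integral_of_le zero_le_one, integral_cpow (Or.inl hc),
      Complex.ofReal_one, Complex.ofReal_zero, Complex.one_cpow, Complex.zero_cpow hc1, sub_zero]
  have hre := integral_re hint
  simp only [RCLike.re_to_complex] at hre
  rw [← integral_Ioc_eq_integral_Ioo, setIntegral_congr_fun measurableSet_Ioc
    fun t ht => (re_ofReal_cpow_natCast_add_mul_I ht.1 n b).symm, hre, hval, one_div,
    Complex.inv_re, Complex.normSq_apply]
  simp [c, sq]

lemma integral_Ioo_pow_mul_one_sub_cos_mul_log (n : ℕ) (b : ℝ) :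
    ∫ t in Ioo 0 1, t ^ n * (1 - cos (b * log t)) = b ^ 2 / ((n + 1) * ((n + 1) ^ 2 + b ^ 2)) := by
  have h0 := integral_Ioo_pow_mul_cos_mul_log n 0
  simp only [zero_mul, cos_zero, mul_one] at h0
  simp only [mul_sub, mul_one]
  have hpow := integrableOn_Ioo_pow_mul_of_bounded (measurable_const (a := (1 : ℝ)))
    (fun _ => le_of_eq abs_one) n
  simp only [mul_one] at hpow
  rw [integral_sub hpow
      (integrableOn_Ioo_pow_mul_of_bounded (by fun_prop) (fun t => abs_cos_le_one (b * log t)) n),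
    h0, integral_Ioo_pow_mul_cos_mul_log]
  field_simp
  ring

lemma Complex.betaIntegral_half_add_mul_I_half_sub_mul_I (b : ℝ) :
    betaIntegral ((1 + b * I) / 2) ((1 - b * I) / 2) = (π / Real.cosh (π * b / 2) : ℝ) := by
  have hs : 0 < ((1 + b * I) / 2).re := by simp
  have ht : 0 < ((1 - b * I) / 2).re := by simp
  have hΓ := Gamma_mul_Gamma_eq_betaIntegral hs ht
  rw [show (1 + b * I) / 2 + (1 - b * I) / 2 = 1 by ring, Gamma_one, one_mul] at hΓ
  rw [← hΓ, show (1 - b * I) / 2 = 1 - (1 + b * I) / 2 by ring, Gamma_mul_Gamma_one_sub,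
    show π * ((1 + b * I) / 2) = (π / 2 : ℝ) + (π * b / 2 : ℝ) * I by push_cast; ring,
    sin_add, ← ofReal_sin, ← ofReal_cos, Real.sin_pi_div_two, Real.cos_pi_div_two, cos_mul_I,
    ← ofReal_cosh]
  push_cast
  simp

lemma image_sq_div_one_add_sq_Ioi : (fun u : ℝ => u ^ 2 / (1 + u ^ 2)) '' Ioi 0 = Ioo 0 1 := by
  ext y
  simp only [mem_image, mem_Ioo, mem_Ioi]
  constructor
  · rintro ⟨u, hu, rfl⟩
    have h0 : (0 : ℝ) < 1 + u ^ 2 := by positivity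
    exact ⟨by positivity, (div_lt_one h0).mpr (by linarith)⟩
  · rintro ⟨h0, h1⟩
    have hy : 0 < y / (1 - y) := div_pos h0 (by linarith)
    refine ⟨√(y / (1 - y)), sqrt_pos.mpr hy, ?_⟩
    rw [sq_sqrt hy.le]
    field_simp
    ring

lemma injOn_sq_div_one_add_sq_Ioi : InjOn (fun u : ℝ => u ^ 2 / (1 + u ^ 2)) (Ioi 0) := by
  intro u hu v hv huv
  rw [div_eq_div_iff (by positivity) (by positivity)] at huv
  exact (pow_left_inj₀ (le_of_lt hu) (le_of_lt hv) two_ne_zero).mp (by linarith)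

lemma betaIntegrand_comp_sq_div_one_add_sq {u : ℝ} (hu : 0 < u) (b : ℝ) :
    |2 * u / (1 + u ^ 2) ^ 2| • (((u ^ 2 / (1 + u ^ 2) : ℝ) : ℂ) ^ ((1 + b * Complex.I) / 2 - 1) *
      (1 - ((u ^ 2 / (1 + u ^ 2) : ℝ) : ℂ)) ^ ((1 - b * Complex.I) / 2 - 1)) =
      ((2 / (1 + u ^ 2) : ℝ) : ℂ) * Complex.exp ((b * log u : ℝ) * Complex.I) := by
  have hu2 : 0 < 1 + u ^ 2 := by positivity
  have hx : 0 < u ^ 2 / (1 + u ^ 2) := by positivity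
  have hlogx : log (u ^ 2 / (1 + u ^ 2)) = 2 * log u - log (1 + u ^ 2) := by
    rw [log_div (by positivity) hu2.ne', log_pow, Nat.cast_ofNat]
  have hone_sub : 1 - ((u ^ 2 / (1 + u ^ 2) : ℝ) : ℂ) = (((1 + u ^ 2)⁻¹ : ℝ) : ℂ) := by
    rw [← Complex.ofReal_one, ← Complex.ofReal_sub]
    congr 1
    field_simp
    ring
  rw [hone_sub, Complex.cpow_def_of_ne_zero (Complex.ofReal_ne_zero.mpr hx.ne'),
    Complex.cpow_def_of_ne_zero (Complex.ofReal_ne_zero.mpr (inv_pos.mpr hu2).ne'),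
    ← Complex.ofReal_log hx.le, ← Complex.ofReal_log (inv_pos.mpr hu2).le, hlogx, log_inv,
    ← Complex.exp_add,
    show ((2 * log u - log (1 + u ^ 2) : ℝ) : ℂ) * ((1 + b * Complex.I) / 2 - 1) +
        ((-log (1 + u ^ 2) : ℝ) : ℂ) * ((1 - b * Complex.I) / 2 - 1) =
        ((log (1 + u ^ 2) - log u : ℝ) : ℂ) + (b * log u : ℝ) * Complex.I by push_cast; ring,
    Complex.exp_add, ← Complex.ofReal_exp, exp_sub, exp_log hu2, exp_log hu, Complex.real_smul,
    ← mul_assoc, ← Complex.ofReal_mul, abs_of_pos (by positivity)]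
  congr 2
  field_simp

lemma betaIntegral_half_add_mul_I_eq_integral_Ioi (b : ℝ) :
    Complex.betaIntegral ((1 + b * Complex.I) / 2) ((1 - b * Complex.I) / 2) =
      ∫ u in Ioi (0 : ℝ),
        ((2 / (1 + u ^ 2) : ℝ) : ℂ) * Complex.exp ((b * log u : ℝ) * Complex.I) := by
  have hderiv : ∀ u ∈ Ioi (0 : ℝ), HasDerivWithinAt (fun u : ℝ => u ^ 2 / (1 + u ^ 2))
      (2 * u / (1 + u ^ 2) ^ 2) (Ioi 0) u := fun u _ => by
    have hsq : HasDerivAt (fun u : ℝ => u ^ 2) (2 * u) u := by simpa using hasDerivAt_pow 2 u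
    refine ((hsq.div (hsq.const_add 1) (by positivity)).hasDerivWithinAt).congr_deriv ?_
    field_simp
    ring
  rw [Complex.betaIntegral, intervalIntegral.integral_of_le zero_le_one,
    integral_Ioc_eq_integral_Ioo, ← image_sq_div_one_add_sq_Ioi,
    integral_image_eq_integral_abs_deriv_smul measurableSet_Ioi hderiv injOn_sq_div_one_add_sq_Ioi]
  exact setIntegral_congr_fun measurableSet_Ioi fun u hu =>
    betaIntegrand_comp_sq_div_one_add_sq hu b

lemma integral_Ioi_cos_mul_log_div_one_add_sq (b : ℝ) :
    ∫ u in Ioi (0 : ℝ), cos (b * log u) / (1 + u ^ 2) = π / (2 * cosh (π * b / 2)) := by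
  have hint : IntegrableOn
      (fun u : ℝ => ((2 / (1 + u ^ 2) : ℝ) : ℂ) * Complex.exp ((b * log u : ℝ) * Complex.I))
      (Ioi 0) := by
    refine Integrable.mono' (integrable_inv_one_add_sq.const_mul 2).integrableOn (by fun_prop)
      (ae_of_all _ fun u => le_of_eq ?_)
    rw [norm_mul, Complex.norm_exp_ofReal_mul_I, mul_one, Complex.norm_real,
      norm_of_nonneg (by positivity), div_eq_mul_inv]
  have hre := integral_re hint
  simp only [RCLike.re_to_complex, Complex.re_ofReal_mul, Complex.exp_ofReal_mul_I_re] at hre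
  rw [← betaIntegral_half_add_mul_I_eq_integral_Ioi,
    Complex.betaIntegral_half_add_mul_I_half_sub_mul_I, Complex.ofReal_re] at hre
  rw [mul_comm 2, ← div_div, ← hre, ← integral_div]
  refine setIntegral_congr_fun measurableSet_Ioi fun u _ => ?_
  field_simp

lemma integrable_cos_mul_log_div_one_add_sq (b : ℝ) :
    Integrable fun t => cos (b * log t) / (1 + t ^ 2) :=
  integrable_inv_one_add_sq.mono' (Measurable.aestronglyMeasurable (by fun_prop))
    (ae_of_all _ fun t => by
      rw [norm_div, norm_of_nonneg (by positivity : (0 : ℝ) ≤ 1 + t ^ 2), div_eq_mul_inv]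
      exact mul_le_of_le_one_left (by positivity) (abs_cos_le_one _))

lemma integral_Ioi_one_eq_integral_Ioo_inv {E : Type*} [NormedAddCommGroup E] [NormedSpace ℝ E]
    (f : ℝ → E) : ∫ u in Ioi 1, f u = ∫ u in Ioo 0 1, (u ^ 2)⁻¹ • f u⁻¹ := by
  have hderiv : ∀ u ∈ Ioo (0 : ℝ) 1, HasDerivWithinAt Inv.inv (-(u ^ 2)⁻¹) (Ioo 0 1) u :=
    fun u hu => (hasDerivAt_inv hu.1.ne').hasDerivWithinAt
  have himage : Inv.inv '' Ioo (0 : ℝ) 1 = Ioi 1 := by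
    rw [image_inv_eq_inv, inv_Ioo_0_left one_pos, inv_one]
  rw [← himage,
    integral_image_eq_integral_abs_deriv_smul measurableSet_Ioo hderiv inv_injective.injOn]
  simp_rw [abs_neg, abs_inv, abs_sq]

lemma integral_Ioo_cos_mul_log_div_one_add_sq (b : ℝ) :
    ∫ t in Ioo 0 1, cos (b * log t) / (1 + t ^ 2) = π / (4 * cosh (π * b / 2)) := by
  set f := fun t : ℝ => cos (b * log t) / (1 + t ^ 2)
  have hint : IntegrableOn f (Ioi 0) := (integrable_cos_mul_log_div_one_add_sq b).integrableOn
  have hsymm : ∫ t in Ioi 1, f t = ∫ t in Ioo 0 1, f t := by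
    rw [integral_Ioi_one_eq_integral_Ioo_inv]
    refine setIntegral_congr_fun measurableSet_Ioo fun t ht => ?_
    simp only [f, smul_eq_mul, log_inv, mul_neg, cos_neg]
    field_simp [ht.1.ne']
    ring
  have hsplit := setIntegral_union (Ioc_disjoint_Ioi le_rfl) measurableSet_Ioi
    (hint.mono_set Ioc_subset_Ioi_self) (hint.mono_set (Ioi_subset_Ioi zero_le_one))
  rw [Ioc_union_Ioi_eq_Ioi zero_le_one, integral_Ioc_eq_integral_Ioo, hsymm,
    integral_Ioi_cos_mul_log_div_one_add_sq] at hsplit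
  rw [show π / (4 * cosh (π * b / 2)) = π / (2 * cosh (π * b / 2)) / 2 by ring, hsplit]
  ring

lemma tsum_alternating_div_odd_mul_odd_sq_add_sq {b : ℝ} (hb : b ≠ 0) :
    ∑' k : ℕ, (-1 : ℝ) ^ k / ((2 * k + 1) * ((2 * k + 1) ^ 2 + b ^ 2)) =
      π / (4 * b ^ 2) * (1 - 1 / cosh (π * b / 2)) := by
  set f : ℕ → ℝ → ℝ := fun k t => t ^ (2 * k) * (1 - cos (b * log t))
  have hmoment : ∀ k : ℕ,
      ∫ t in Ioo 0 1, f k t = b ^ 2 / ((2 * k + 1) * ((2 * k + 1) ^ 2 + b ^ 2)) := fun k => by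
    simp only [f, integral_Ioo_pow_mul_one_sub_cos_mul_log]
    push_cast
    ring
  have hf : ∀ k, IntegrableOn (f k) (Ioo 0 1) := fun k =>
    integrableOn_Ioo_pow_mul_of_bounded (by fun_prop) (C := 2) (fun t => by
      rw [abs_le]; constructor <;> linarith [neg_one_le_cos (b * log t), cos_le_one (b * log t)]) _
  have hf0 : ∀ k, 0 ≤ᵐ[volume.restrict (Ioo 0 1)] f k := fun k =>
    ae_of_all _ fun t => mul_nonneg ((even_two_mul k).pow_nonneg t) (sub_nonneg.mpr (cos_le_one _))
  have hs : Summable fun k : ℕ => |(-1 : ℝ) ^ k / b ^ 2| * ∫ t in Ioo 0 1, f k t := by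
    refine (summable_one_div_odd_mul_odd_sq_add (sq_nonneg b)).congr fun k => ?_
    rw [hmoment, abs_div, abs_pow, abs_neg, abs_one, one_pow, abs_of_nonneg (sq_nonneg b)]
    field_simp
  have hgeom : ∀ t ∈ Ioo (0 : ℝ) 1,
      ∑' k, (-1 : ℝ) ^ k / b ^ 2 * f k t = (1 - cos (b * log t)) / (1 + t ^ 2) / b ^ 2 := by
    intro t ht
    have ht2 : |-t ^ 2| < 1 := by
      rw [abs_neg, abs_of_nonneg (sq_nonneg t)]; nlinarith [ht.1, ht.2]
    simp only [f, show ∀ k : ℕ, (-1 : ℝ) ^ k / b ^ 2 * (t ^ (2 * k) * (1 - cos (b * log t))) =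
        (-t ^ 2) ^ k * ((1 - cos (b * log t)) / b ^ 2) from fun k => by rw [neg_pow, pow_mul]; ring]
    rw [tsum_mul_right, tsum_geometric_of_abs_lt_one ht2, sub_neg_eq_add]
    field_simp
  have harctan : ∫ t in Ioo (0 : ℝ) 1, 1 / (1 + t ^ 2) = π / 4 := by
    rw [← integral_Ioc_eq_integral_Ioo, ← intervalIntegral.integral_of_le zero_le_one,
      integral_one_div_one_add_sq, arctan_one, arctan_zero, sub_zero]
  calc ∑' k : ℕ, (-1 : ℝ) ^ k / ((2 * k + 1) * ((2 * k + 1) ^ 2 + b ^ 2))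
      = ∑' k, (-1 : ℝ) ^ k / b ^ 2 * ∫ t in Ioo 0 1, f k t := tsum_congr fun k => by
        rw [hmoment]; field_simp
    _ = ∫ t in Ioo 0 1, ∑' k, (-1 : ℝ) ^ k / b ^ 2 * f k t :=
        (integral_tsum_mul_of_nonneg _ hf hf0 hs).symm
    _ = ∫ t in Ioo 0 1, (1 - cos (b * log t)) / (1 + t ^ 2) / b ^ 2 :=
        setIntegral_congr_fun measurableSet_Ioo hgeom
    _ = ((∫ t in Ioo (0 : ℝ) 1, 1 / (1 + t ^ 2)) -
          ∫ t in Ioo 0 1, cos (b * log t) / (1 + t ^ 2)) / b ^ 2 := by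
        rw [← integral_sub (by simpa only [one_div] using integrable_inv_one_add_sq.restrict)
          (integrable_cos_mul_log_div_one_add_sq b).integrableOn, ← integral_div]
        simp only [sub_div]
    _ = π / (4 * b ^ 2) * (1 - 1 / cosh (π * b / 2)) := by
        rw [harctan, integral_Ioo_cos_mul_log_div_one_add_sq]
        field_simp

lemma antitone_exp_neg_odd_sq_mul_div_odd {a : ℝ} (ha : 0 ≤ a) :
    Antitone fun k : ℕ => exp (-((2 * k + 1) ^ 2 * a)) / (2 * k + 1) :=
  antitone_nat_of_succ_le fun k => by
    push_cast
    gcongr <;> linarith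

lemma summable_exp_neg_odd_sq_mul_div_odd {a : ℝ} (ha : 0 < a) :
    Summable fun k : ℕ => exp (-((2 * k + 1) ^ 2 * a)) / (2 * k + 1) := by
  refine (summable_geometric_of_lt_one (exp_pos (-a)).le
    (exp_lt_one_iff.mpr (neg_lt_zero.mpr ha))).of_nonneg_of_le (fun k => by positivity) fun k => ?_
  rw [← exp_nat_mul]
  calc exp (-((2 * k + 1) ^ 2 * a)) / (2 * k + 1) ≤ exp (-((2 * k + 1) ^ 2 * a)) :=
        div_le_self (exp_pos _).le (by linarith [(k.cast_nonneg : (0 : ℝ) ≤ k)])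
    _ ≤ exp (k * -a) := by
        have hk : (k : ℝ) ≤ (2 * k + 1) ^ 2 := by nlinarith [(k.cast_nonneg : (0 : ℝ) ≤ k)]
        gcongr
        nlinarith

lemma integral_Ioi_exp_neg_mul_mul_kestenGolosov {h l : ℝ} (hh : h ≠ 0) (hl : 0 ≤ l) :
    ∫ x in Ioi (0 : ℝ), exp (-(l * x)) * (4 / π * ∑' k : ℕ,
        (-1 : ℝ) ^ k / ((2 * k + 1) * h ^ 2) * exp (-((2 * k + 1) ^ 2 * π ^ 2 * x) / (8 * h ^ 2))) =
      32 / π ^ 3 * ∑' k : ℕ,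
        (-1 : ℝ) ^ k / ((2 * k + 1) * ((2 * k + 1) ^ 2 + 8 * h ^ 2 * l / π ^ 2)) := by
  set d : ℕ → ℝ := fun k => l + (2 * k + 1) ^ 2 * π ^ 2 / (8 * h ^ 2)
  have hd : ∀ k, 0 < d k := fun k => by positivity
  have hcd : ∀ k : ℕ, (-1 : ℝ) ^ k / ((2 * k + 1) * h ^ 2) / d k =
      8 / π ^ 2 * ((-1 : ℝ) ^ k / ((2 * k + 1) * ((2 * k + 1) ^ 2 + 8 * h ^ 2 * l / π ^ 2))) :=
    fun k => by simp only [d]; field_simp; ring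
  have hs : Summable fun k : ℕ => |(-1 : ℝ) ^ k / ((2 * k + 1) * h ^ 2)| / d k := by
    refine ((summable_one_div_odd_mul_odd_sq_add (β := 8 * h ^ 2 * l / π ^ 2)
      (by positivity)).mul_left (8 / π ^ 2)).congr fun k => ?_
    rw [abs_div, abs_pow, abs_neg, abs_one, one_pow, abs_of_pos (by positivity)]
    simp only [d]
    field_simp
    ring
  calc _ = ∫ x in Ioi (0 : ℝ), 4 / π * ∑' k : ℕ, (-1 : ℝ) ^ k / ((2 * k + 1) * h ^ 2) *
        exp (-(d k * x)) := by
        refine setIntegral_congr_fun measurableSet_Ioi fun x _ => ?_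
        rw [mul_left_comm, ← tsum_mul_left]
        congr 2 with k
        rw [mul_left_comm, ← exp_add]
        congr 2
        simp only [d]
        field_simp
        ring
    _ = _ := by
        rw [integral_const_mul, integral_Ioi_tsum_mul_exp_neg _ hd hs, tsum_congr hcd,
          tsum_mul_left]
        field_simp
        ring

/-- The Kesten–Golosov density
`g(x) = (4/π) Σ_{k≥0} (-1)^k/((2k+1)h²) exp(-(2k+1)²π²x/(8h²))`:
the series converges, `g ≥ 0`, `∫₀^∞ g = 1`, and its Laplace transform is
`(1/(h²λ))(1 - 1/cosh(h√(2λ)))`. -/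
theorem stmt_6 (h : ℝ) (hh : 0 < h)
    (g : ℝ → ℝ)
    (hg : ∀ x : ℝ, g x = 4 / π *
      ∑' k : ℕ, (-1 : ℝ) ^ k / ((2 * k + 1) * h ^ 2) *
        Real.exp (-((2 * k + 1) ^ 2 * π ^ 2 * x) / (8 * h ^ 2))) :
    (∀ x : ℝ, 0 < x → Summable (fun k : ℕ =>
        (-1 : ℝ) ^ k / ((2 * k + 1) * h ^ 2) *
          Real.exp (-((2 * k + 1) ^ 2 * π ^ 2 * x) / (8 * h ^ 2)))) ∧
    (∀ x : ℝ, 0 < x → 0 ≤ g x) ∧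
    ((∫ x in Set.Ioi (0 : ℝ), g x) = 1) ∧
    (∀ l : ℝ, 0 < l →
      (∫ x in Set.Ioi (0 : ℝ), Real.exp (-l * x) * g x)
        = 1 / (h ^ 2 * l) * (1 - 1 / Real.cosh (h * Real.sqrt (2 * l)))) := by
  have hterm : ∀ x (k : ℕ), (-1 : ℝ) ^ k / ((2 * k + 1) * h ^ 2) *
      exp (-((2 * k + 1) ^ 2 * π ^ 2 * x) / (8 * h ^ 2)) =
      (-1) ^ k * (exp (-((2 * k + 1) ^ 2 * (π ^ 2 * x / (8 * h ^ 2)))) / (2 * k + 1)) / h ^ 2 :=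
    fun x k => by
      rw [show -((2 * k + 1) ^ 2 * π ^ 2 * x) / (8 * h ^ 2) =
        -((2 * k + 1) ^ 2 * (π ^ 2 * x / (8 * h ^ 2))) by ring]
      field_simp
  have halternating : ∀ x : ℝ, 0 < x → Summable fun k : ℕ =>
      (-1 : ℝ) ^ k * (exp (-((2 * k + 1) ^ 2 * (π ^ 2 * x / (8 * h ^ 2)))) / (2 * k + 1)) :=
    fun x hx => (summable_exp_neg_odd_sq_mul_div_odd (a := π ^ 2 * x / (8 * h ^ 2))
      (by positivity)).of_norm_bounded fun k => by
      rw [norm_mul, norm_pow, norm_neg, norm_one, one_pow, one_mul, norm_of_nonneg (by positivity)]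
  refine ⟨fun x hx => ?_, fun x hx => ?_, ?_, fun l hl => ?_⟩
  · simpa only [hterm x] using (halternating x hx).div_const (h ^ 2)
  · rw [hg, tsum_congr (hterm x), tsum_div_const]
    exact mul_nonneg (by positivity) (div_nonneg (tsum_alternating_nonneg_of_antitone
      (antitone_exp_neg_odd_sq_mul_div_odd (by positivity)) (halternating x hx)) (sq_nonneg h))
  · have hmass := integral_Ioi_exp_neg_mul_mul_kestenGolosov hh.ne' le_rfl
    simp only [zero_mul, neg_zero, exp_zero, one_mul, mul_zero, zero_div, add_zero] at hmass
    simp only [hg]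
    rw [hmass, tsum_congr fun k => by rw [← pow_succ'],
      hasSum_alternating_inv_odd_pow_three.tsum_eq]
    field_simp
  · have hb : 8 * h ^ 2 * l / π ^ 2 = (2 * h * √(2 * l) / π) ^ 2 := by
      rw [div_pow, mul_pow, mul_pow, sq_sqrt (by positivity)]
      ring
    simp only [hg, neg_mul]
    rw [integral_Ioi_exp_neg_mul_mul_kestenGolosov hh.ne' hl.le, hb,
      tsum_alternating_div_odd_mul_odd_sq_add_sq (by positivity),
      show π * (2 * h * √(2 * l) / π) / 2 = h * √(2 * l) by field_simp, ← hb]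
    field_simp
    ring
end
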